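/- Let V be a finite set, f : Finset V → ℝ a nonnegative submodular function with f(∅) = 0, M a matroid on V of rank k ≥ 2, and let P_1, …, P_k be a greedy splitting sequence for (f, M). Then for every feasible partition P* of V (a partition into nonempty parts admitting a basis B of M with |B ∩ X| = 1 for every class X ∈ P*), we have Σ_{X ∈ P_k} f(X) ≤ (k − 1) · Σ_{X ∈ P*} f(X). -/

import Mathlib

/-!
Write `F = ∑_{X ∈ P*} f X` and let `B` be a basis that is a transversal of `P*`. Every partition
`Q` with fewer than `k` classes admitting an independent transversal has an admissible split of
cost at most `F - f V`: take an independent transversal `I` of `Q` meeting `B` as often as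
possible and augment it by some `e ∈ B \ I`. If `e ∈ W ∈ Q` and `e ∈ S ∈ P*`, maximality forces
the element of `I` in `W` to lie outside `S`, so `insert e I` is a transversal of the partition
in which `W` is split into `W ∩ S` and `W \ S`. By submodularity this split costs at most
`f S + f (V \ S) - f V ≤ F - f V`. Greedy splits are no more expensive, hence
`∑_{X ∈ P_i} f X ≤ f V + (i - 1) (F - f V)`, and for `i = k` the right-hand side is at most
`(k - 1) F` because `f V ≥ 0`.
-/

open Finset

variable {V : Type*} [Fintype V] [DecidableEq V]

/-- `P` is a partition of the finite ground set into nonempty parts. -/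
def IsPartition (P : Finset (Finset V)) : Prop :=
  (∀ X ∈ P, X.Nonempty) ∧
  (∀ X ∈ P, ∀ Y ∈ P, X ≠ Y → Disjoint X Y) ∧
  P.sup id = Finset.univ

/-- `P` is a feasible partition for the rank-`k` matroid given by `Indep`. -/
def Feasible (Indep : Finset V → Prop) (k : ℕ) (P : Finset (Finset V)) : Prop :=
  IsPartition P ∧ ∃ B : Finset V, Indep B ∧ B.card = k ∧ ∀ X ∈ P, (B ∩ X).card = 1

/-- `P` admits an independent transversal: there is an independent set containing
exactly one element of each class of `P`. -/
def AdmitsTransversal (Indep : Finset V → Prop) (P : Finset (Finset V)) : Prop :=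
  ∃ I : Finset V, Indep I ∧ ∀ X ∈ P, (I ∩ X).card = 1

/-- A greedy splitting sequence for `(f, M)`: it starts with the trivial partition
`{V}` and, at each step, one class `W` is split into nonempty parts `X, W \ X` such
that the new partition admits an independent transversal and the split minimizes
`f(X') + f(W' \ X') - f(W')` over all such admissible splits. -/
def GreedySplitSeq (f : Finset V → ℝ) (Indep : Finset V → Prop) (k : ℕ)
    (P : ℕ → Finset (Finset V)) : Prop :=
  P 1 = {Finset.univ} ∧
  ∀ i : ℕ, 1 ≤ i → i + 1 ≤ k →
    ∃ W ∈ P i, ∃ X : Finset V, X.Nonempty ∧ X ⊂ W ∧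
      P (i + 1) = insert X (insert (W \ X) ((P i).erase W)) ∧
      AdmitsTransversal Indep (P (i + 1)) ∧
      ∀ W' ∈ P i, ∀ X' : Finset V, X'.Nonempty → X' ⊂ W' →
        AdmitsTransversal Indep (insert X' (insert (W' \ X') ((P i).erase W'))) →
        f X + f (W \ X) - f W ≤ f X' + f (W' \ X') - f W'

section Submodular

variable {α : Type*} [DecidableEq α] {f : Finset α → ℝ}

theorem le_sum_of_submodular (h_nonneg : ∀ A, 0 ≤ f A)
    (h_submod : ∀ A B, f (A ∪ B) + f (A ∩ B) ≤ f A + f B) (h_empty : f ∅ = 0)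
    (Q : Finset (Finset α)) : f (Q.sup id) ≤ ∑ X ∈ Q, f X := by
  induction Q using Finset.induction_on with
  | empty => simp [h_empty]
  | insert X Q hX ih =>
    rw [sup_insert, sum_insert hX, id, sup_eq_union]
    linarith [h_submod X (Q.sup id), h_nonneg (X ∩ Q.sup id)]

theorem split_cost_le_of_submodular [Fintype α]
    (h_submod : ∀ A B, f (A ∪ B) + f (A ∩ B) ≤ f A + f B) (W S : Finset α) :
    f (W ∩ S) + f (W \ S) - f W ≤ f S + f (univ \ S) - f univ := by
  have h₁ := h_submod S W
  have h₂ := h_submod (univ \ S) W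
  have h₃ := h_submod (S ∪ W) (univ \ S ∪ W)
  rw [inter_comm] at h₁
  rw [show univ \ S ∩ W = W \ S by ext; simp; tauto] at h₂
  rw [show S ∪ W ∪ (univ \ S ∪ W) = univ by ext; simp; tauto,
    show (S ∪ W) ∩ (univ \ S ∪ W) = W by ext; simp; tauto] at h₃
  linarith

end Submodular

section Transversal

variable {α : Type*} [DecidableEq α]

def splitClass (P : Finset (Finset α)) (W X : Finset α) : Finset (Finset α) :=
  insert X (insert (W \ X) (P.erase W))

def IsTransversal (P : Finset (Finset α)) (I : Finset α) : Prop :=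
  ∀ X ∈ P, (I ∩ X).card = 1

variable {P : Finset (Finset α)} {I W X : Finset α} {x e : α}

theorem IsTransversal.insert_erase (hP : (P : Set (Finset α)).PairwiseDisjoint id)
    (hI : IsTransversal P I) (hW : W ∈ P) (hx : I ∩ W = {x}) (he : e ∈ W) :
    IsTransversal P (insert e (I.erase x)) := by
  intro Y hY
  by_cases hYW : Y = W
  · subst hYW
    rw [insert_inter_of_mem he, erase_inter, hx, erase_singleton, insert_empty, card_singleton]
  · have hWY : Disjoint W Y := hP hW hY (Ne.symm hYW)
    have hxW : x ∈ W := (mem_inter.1 (hx ▸ mem_singleton_self x : x ∈ I ∩ W)).2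
    rw [insert_inter_of_notMem (disjoint_left.1 hWY he), erase_inter,
      erase_eq_of_notMem fun h => disjoint_left.1 hWY hxW (mem_inter.1 h).2]
    exact hI Y hY

theorem IsTransversal.insert_splitClass (hP : (P : Set (Finset α)).PairwiseDisjoint id)
    (hI : IsTransversal P I) (hW : W ∈ P) (hx : I ∩ W = {x}) (hXW : X ⊆ W) (hxX : x ∉ X)
    (he : e ∈ X) : IsTransversal (splitClass P W X) (insert e I) := by
  have hIX : I ∩ X = ∅ := by
    refine eq_empty_of_forall_notMem fun a ha => hxX ?_
    have hxa : a = x := mem_singleton.1 (hx ▸ inter_subset_inter_left hXW ha)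
    exact hxa ▸ (mem_inter.1 ha).2
  simp only [IsTransversal, splitClass, mem_insert, forall_eq_or_imp]
  refine ⟨?_, ?_, fun Y hY => ?_⟩
  · rw [insert_inter_of_mem he, hIX, insert_empty, card_singleton]
  · rw [insert_inter_of_notMem fun h => (mem_sdiff.1 h).2 he, ← inter_sdiff_assoc, hx,
      sdiff_eq_self_of_disjoint (disjoint_singleton_left.2 hxX), card_singleton]
  · have hWY : Disjoint W Y := hP hW (mem_of_mem_erase hY) (ne_of_mem_erase hY).symm
    rw [insert_inter_of_notMem (disjoint_left.1 hWY (hXW he))]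
    exact hI Y (mem_of_mem_erase hY)

end Transversal

namespace IsPartition

variable {P : Finset (Finset V)} {I S W X : Finset V}

theorem exists_mem (hP : IsPartition P) (a : V) : ∃ X ∈ P, a ∈ X := by
  simpa using mem_sup.1 (hP.2.2 ▸ mem_univ a)

theorem eq_of_mem (hP : IsPartition P) {X Y : Finset V} {a : V} (hX : X ∈ P) (hY : Y ∈ P)
    (haX : a ∈ X) (haY : a ∈ Y) : X = Y :=
  by_contra fun h => disjoint_left.1 (hP.2.1 X hX Y hY h) haX haY

theorem sup_erase (hP : IsPartition P) (hS : S ∈ P) : (P.erase S).sup id = univ \ S := by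
  ext a
  simp only [mem_sup, mem_erase, id, mem_sdiff, mem_univ, true_and]
  constructor
  · rintro ⟨Y, ⟨hYS, hY⟩, haY⟩ haS
    exact hYS (hP.eq_of_mem hY hS haY haS)
  · intro haS
    obtain ⟨Y, hY, haY⟩ := hP.exists_mem a
    exact ⟨Y, ⟨fun h => haS (h ▸ haY), hY⟩, haY⟩

theorem card_eq_of_isTransversal (hP : IsPartition P) (hI : IsTransversal P I) :
    I.card = P.card := by
  calc I.card = (I ∩ P.sup id).card := by rw [hP.2.2, inter_univ]
    _ = ∑ X ∈ P, (I ∩ X).card := by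
        rw [sup_eq_biUnion, inter_biUnion]
        exact card_biUnion fun X hX Y hY hXY =>
          (hP.2.1 X hX Y hY hXY).mono inter_subset_right inter_subset_right
    _ = P.card := by rw [sum_congr rfl hI, card_eq_sum_ones]

theorem notMem_erase_of_subset (hP : IsPartition P) (hW : W ∈ P) {Z : Finset V}
    (hZ : Z.Nonempty) (hZW : Z ⊆ W) : Z ∉ P.erase W := fun h =>
  ne_of_mem_erase h (hP.eq_of_mem (mem_of_mem_erase h) hW hZ.choose_spec (hZW hZ.choose_spec))

theorem isPartition_splitClass (hP : IsPartition P) (hW : W ∈ P) (hX : X.Nonempty) (hXW : X ⊂ W) :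
    IsPartition (splitClass P W X) := by
  obtain ⟨hne, hdisj, hcov⟩ := hP
  have hWY : ∀ Y ∈ P.erase W, Disjoint W Y := fun Y hY =>
    hdisj W hW Y (mem_of_mem_erase hY) (ne_of_mem_erase hY).symm
  refine ⟨?_, ?_, ?_⟩
  · simp only [splitClass, mem_insert]
    rintro Y (rfl | rfl | hY)
    · exact hX
    · exact sdiff_nonempty.2 hXW.not_subset
    · exact hne Y (mem_of_mem_erase hY)
  · change ((splitClass P W X : Finset _) : Set (Finset V)).PairwiseDisjoint id
    have hdisj' : ((P.erase W : Finset _) : Set (Finset V)).PairwiseDisjoint id :=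
      Set.PairwiseDisjoint.subset hdisj (coe_subset.2 (erase_subset _ _))
    rw [splitClass, coe_insert, coe_insert]
    refine (hdisj'.insert fun Y hY _ => (hWY Y hY).mono_left sdiff_subset).insert ?_
    simp only [Set.mem_insert_iff, mem_coe]
    rintro Y (rfl | hY) _
    · exact disjoint_sdiff_self_right
    · exact (hWY Y hY).mono_left hXW.subset
  · have h : (insert W (P.erase W)).sup id = univ := by rw [insert_erase hW, hcov]
    rw [sup_insert] at h
    simpa [splitClass, ← union_assoc, union_sdiff_of_subset hXW.subset] using h

theorem notMem_insert_sdiff_erase (hP : IsPartition P) (hW : W ∈ P) (hX : X.Nonempty)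
    (hXW : X ⊂ W) :
    X ∉ insert (W \ X) (P.erase W) ∧ W \ X ∉ P.erase W := by
  obtain ⟨a, ha⟩ := hX
  refine ⟨?_, hP.notMem_erase_of_subset hW (sdiff_nonempty.2 hXW.not_subset) sdiff_subset⟩
  rw [mem_insert, not_or]
  exact ⟨fun h => (mem_sdiff.1 (h ▸ ha)).2 ha, hP.notMem_erase_of_subset hW ⟨a, ha⟩ hXW.subset⟩

theorem card_splitClass (hP : IsPartition P) (hW : W ∈ P) (hX : X.Nonempty) (hXW : X ⊂ W) :
    (splitClass P W X).card = P.card + 1 := by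
  obtain ⟨hX', hWX⟩ := hP.notMem_insert_sdiff_erase hW hX hXW
  rw [splitClass, card_insert_of_notMem hX', card_insert_of_notMem hWX,
    card_erase_add_one hW]

theorem sum_splitClass {M : Type*} [AddCommGroup M] (hP : IsPartition P) (hW : W ∈ P)
    (hX : X.Nonempty) (hXW : X ⊂ W) (g : Finset V → M) :
    ∑ Y ∈ splitClass P W X, g Y = ∑ Y ∈ P, g Y + (g X + g (W \ X) - g W) := by
  obtain ⟨hX', hWX⟩ := hP.notMem_insert_sdiff_erase hW hX hXW
  rw [splitClass, sum_insert hX', sum_insert hWX, ← sum_erase_add P g hW]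
  abel

end IsPartition

theorem IsPartition.split_cost_le {f : Finset V → ℝ} (h_nonneg : ∀ A, 0 ≤ f A)
    (h_submod : ∀ A B, f (A ∪ B) + f (A ∩ B) ≤ f A + f B) (h_empty : f ∅ = 0)
    {P : Finset (Finset V)} {S : Finset V} (hP : IsPartition P) (hS : S ∈ P) (W : Finset V) :
    f (W ∩ S) + f (W \ (W ∩ S)) - f W ≤ ∑ Y ∈ P, f Y - f univ := by
  have h := le_sum_of_submodular h_nonneg h_submod h_empty (P.erase S)
  rw [hP.sup_erase hS] at h
  rw [sdiff_inter_self_left]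
  linarith [split_cost_le_of_submodular h_submod W S, sum_erase_add P f hS]

theorem IsPartition.exists_splitClass_admitsTransversal {Indep : Finset V → Prop}
    (h_subset : ∀ ⦃I J : Finset V⦄, Indep J → I ⊆ J → Indep I)
    (h_exchange : ∀ ⦃I J : Finset V⦄, Indep I → Indep J → I.card < J.card →
      ∃ e ∈ J \ I, Indep (insert e I))
    {Q Pstar : Finset (Finset V)} {B : Finset V} (hQ : IsPartition Q)
    (hQI : AdmitsTransversal Indep Q) (hPstar : IsPartition Pstar) (hB : Indep B)
    (hBP : IsTransversal Pstar B) (hQB : Q.card < B.card) :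
    ∃ W ∈ Q, ∃ S ∈ Pstar, (W ∩ S).Nonempty ∧ W ∩ S ⊂ W ∧
      AdmitsTransversal Indep (splitClass Q W (W ∩ S)) := by
  obtain ⟨I, ⟨hI, hIQ⟩, hmax⟩ := Set.exists_max_image {I | Indep I ∧ IsTransversal Q I}
    (fun I => (I ∩ B).card) (Set.toFinite _) hQI
  obtain ⟨e, he, hIe⟩ := h_exchange hI hB (by rwa [hQ.card_eq_of_isTransversal hIQ])
  obtain ⟨heB, heI⟩ := mem_sdiff.1 he
  obtain ⟨W, hW, heW⟩ := hQ.exists_mem e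
  obtain ⟨S, hS, heS⟩ := hPstar.exists_mem e
  obtain ⟨x, hx⟩ := card_eq_one.1 (hIQ W hW)
  obtain ⟨hxI, hxW⟩ := mem_inter.1 (hx ▸ mem_singleton_self x : x ∈ I ∩ W)
  -- Otherwise trading `x` for `e` gives an independent transversal meeting `B` more often.
  have hxS : x ∉ S := by
    intro hxS
    have hxB : x ∉ B := fun hxB => heI <|
      card_le_one.1 (hBP S hS).le x (mem_inter.2 ⟨hxB, hxS⟩) e (mem_inter.2 ⟨heB, heS⟩) ▸ hxI
    have hswap : insert e (I.erase x) ∩ B = insert e (I ∩ B) := by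
      rw [insert_inter_of_mem heB, erase_inter,
        erase_eq_of_notMem fun h => hxB (mem_inter.1 h).2]
    have h := hmax (insert e (I.erase x))
      ⟨h_subset hIe (insert_subset_insert e (erase_subset x I)),
        hIQ.insert_erase hQ.2.1 hW hx heW⟩
    rw [hswap, card_insert_of_notMem fun h => heI (mem_inter.1 h).1] at h
    omega
  have hxWS : x ∉ W ∩ S := fun h => hxS (mem_inter.1 h).2
  refine ⟨W, hW, S, hS, ⟨e, mem_inter.2 ⟨heW, heS⟩⟩,
    (ssubset_iff_of_subset inter_subset_left).2 ⟨x, hxW, hxWS⟩, insert e I, hIe, ?_⟩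
  exact hIQ.insert_splitClass hQ.2.1 hW hx inter_subset_left hxWS (mem_inter.2 ⟨heW, heS⟩)

theorem GreedySplitSeq.invariant {f : Finset V → ℝ} (h_nonneg : ∀ A, 0 ≤ f A)
    (h_submod : ∀ A B, f (A ∪ B) + f (A ∩ B) ≤ f A + f B) (h_empty : f ∅ = 0)
    {Indep : Finset V → Prop} (h_subset : ∀ ⦃I J : Finset V⦄, Indep J → I ⊆ J → Indep I)
    (h_exchange : ∀ ⦃I J : Finset V⦄, Indep I → Indep J → I.card < J.card →
      ∃ e ∈ J \ I, Indep (insert e I))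
    {k : ℕ} {P : ℕ → Finset (Finset V)} (hP : GreedySplitSeq f Indep k P)
    {Pstar : Finset (Finset V)} {B : Finset V} (hPstar : IsPartition Pstar) (hB : Indep B)
    (hBk : B.card = k) (hBP : IsTransversal Pstar B) {i : ℕ} (hi : 1 ≤ i) (hik : i ≤ k) :
    IsPartition (P i) ∧ (P i).card = i ∧ AdmitsTransversal Indep (P i) ∧
      ∑ X ∈ P i, f X ≤ f univ + ((i : ℝ) - 1) * (∑ Y ∈ Pstar, f Y - f univ) := by
  induction i, hi using Nat.le_induction with
  | base =>
    obtain ⟨b, hb⟩ := card_pos.1 (hBk ▸ hik : 0 < B.card)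
    rw [hP.1]
    refine ⟨⟨by simpa using ⟨b, mem_univ b⟩, by simp, by simp⟩, card_singleton _,
      ⟨{b}, h_subset hB (singleton_subset_iff.2 hb), by simp⟩, by simp⟩
  | succ i hi ih =>
    obtain ⟨hPi, hcard, hadm, hsum⟩ := ih (by omega)
    obtain ⟨W, hW, X, hX, hXW, hPs, hadm', hmin⟩ := hP.2 i hi hik
    obtain ⟨W₀, hW₀, S, hS, hne, hsub, hadm₀⟩ := hPi.exists_splitClass_admitsTransversal
      h_subset h_exchange hadm hPstar hB hBP (by omega)
    have hcost := (hmin W₀ hW₀ _ hne hsub hadm₀).trans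
      (hPstar.split_cost_le h_nonneg h_submod h_empty hS W₀)
    change P (i + 1) = splitClass (P i) W X at hPs
    rw [hPs] at hadm' ⊢
    refine ⟨hPi.isPartition_splitClass hW hX hXW, by rw [hPi.card_splitClass hW hX hXW, hcard],
      hadm', ?_⟩
    rw [hPi.sum_splitClass hW hX hXW]
    push_cast
    linarith

theorem greedy_splitting_general_approx_general
    (f : Finset V → ℝ)
    (h_nonneg : ∀ A : Finset V, 0 ≤ f A)
    (h_submod : ∀ A B : Finset V, f (A ∪ B) + f (A ∩ B) ≤ f A + f B)
    (h_empty_f : f ∅ = 0)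
    (Indep : Finset V → Prop)
    (h_subset : ∀ ⦃I J : Finset V⦄, Indep J → I ⊆ J → Indep I)
    (h_exchange : ∀ ⦃I J : Finset V⦄, Indep I → Indep J → I.card < J.card →
      ∃ e ∈ J \ I, Indep (insert e I))
    (k : ℕ) (hk : 2 ≤ k)
    (P : ℕ → Finset (Finset V)) (hP : GreedySplitSeq f Indep k P)
    (Pstar : Finset (Finset V)) (hPstar : Feasible Indep k Pstar) :
    ∑ X ∈ P k, f X ≤ ((k : ℝ) - 1) * ∑ X ∈ Pstar, f X := by
  obtain ⟨hPstar, B, hB, hBk, hBP⟩ := hPstar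
  obtain ⟨-, -, -, hsum⟩ := hP.invariant h_nonneg h_submod h_empty_f h_subset h_exchange
    hPstar hB hBk hBP (by omega) le_rfl
  have hk' : (2 : ℝ) ≤ k := by exact_mod_cast hk
  nlinarith [mul_nonneg (sub_nonneg.2 hk') (h_nonneg univ)]

/-- greedy splitting is a (k - 1)-approximation for submodular matroid-constrained partitioning. -/
theorem greedy_splitting_general_approx
    (f : Finset V → ℝ)
    (h_nonneg : ∀ A : Finset V, 0 ≤ f A)
    (h_submod : ∀ A B : Finset V, f (A ∪ B) + f (A ∩ B) ≤ f A + f B)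
    (h_empty_f : f ∅ = 0)
    (Indep : Finset V → Prop)
    (h_empty : Indep ∅)
    (h_subset : ∀ ⦃I J : Finset V⦄, Indep J → I ⊆ J → Indep I)
    (h_exchange : ∀ ⦃I J : Finset V⦄, Indep I → Indep J → I.card < J.card →
      ∃ e ∈ J \ I, Indep (insert e I))
    (k : ℕ) (hk : 2 ≤ k)
    (h_rank_le : ∀ I : Finset V, Indep I → I.card ≤ k)
    (h_rank_eq : ∃ B : Finset V, Indep B ∧ B.card = k)
    (P : ℕ → Finset (Finset V)) (hP : GreedySplitSeq f Indep k P)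
    (Pstar : Finset (Finset V)) (hPstar : Feasible Indep k Pstar) :
    ∑ X ∈ P k, f X ≤ ((k : ℝ) - 1) * ∑ X ∈ Pstar, f X :=
  greedy_splitting_general_approx_general f h_nonneg h_submod h_empty_f Indep h_subset h_exchange k
    hk P hP Pstar hPstar
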